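/- Let N = (V, E⃗) be a directed network, S, T disjoint nonempty subsets of V, 0 < θ < 1/9, and f: E⃗ → [0,∞) a (possibly improper) flow with size(f) = (1/2)Σ_{v∈V}|f⁺(v)| satisfying: (a) Σ_{v ∈ V∖(S∪T)} |f⁺(v)| ≤ θ·size(f), and (b) Σ_{v∈S}|f⁺(v) − size(f)/|S|| + Σ_{v∈T}|f⁻(v) − size(f)/|T|| ≤ θ·size(f). Then there exists a proper ST flow g with: (1) 0 ≤ g(e⃗) ≤ f(e⃗) for all e⃗; (2) g⁺(s) ≥ 0 for all s ∈ S, g⁻(t) ≥ 0 for all t ∈ T, and vol(g) = Σ_{s∈S} g⁺(s) = Σ_{t∈T} g⁻(t) ≥ (1−2θ)·size(f); (3) Σ_{v∈S}|g⁺(v) − vol(g)/|S|| + Σ_{v∈T}|g⁻(v) − vol(g)/|T|| ≤ 9θ·vol(g). -/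

import Mathlib

/-!
Decompose `f` into paths: as long as some vertex has excess, follow edges carrying flow from it
to a vertex with deficit and push along that walk as much as its bottleneck, the excess and the
deficit allow; each push removes an edge or an excess. The result is a transport plan `φ u v`
whose row sums are the excesses and column sums the deficits of `f`, each entry carried by a
flow, all of them together below `f`. Keeping the `S → T` entries gives a proper `ST` flow `g`.
The lost mass, `φ` outside `S × T`, is at most the excess outside `S` plus the deficit outside
`T`, hence at most `2θ·size(f)` by (a) and (b); this gives the volume bound, and restricting
the plan to `S × T` worsens the balance of its marginals by at most three times the lost mass,
so the imbalance of `g` is at most `7θ·size(f) ≤ 9θ·(1 - 2θ)·size(f) ≤ 9θ·vol(g)`.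
-/

open Finset

/-- The net outflow of `g` at `x` in a finite directed network (flows on ordered pairs). -/
def netOut {V : Type*} [Fintype V] (g : V → V → ℝ) (x : V) : ℝ :=
  ∑ y, (g x y - g y x)

section NetOut

variable {V : Type*} [Fintype V]

@[simp] lemma netOut_zero : netOut (0 : V → V → ℝ) = 0 := by
  ext; simp [netOut]

lemma netOut_add (f g : V → V → ℝ) : netOut (f + g) = netOut f + netOut g := by
  ext x
  simp only [netOut, Pi.add_apply, ← sum_add_distrib]
  exact sum_congr rfl fun _ _ => by ring

lemma netOut_sub (f g : V → V → ℝ) : netOut (f - g) = netOut f - netOut g := by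
  ext x
  simp only [netOut, Pi.sub_apply, ← sum_sub_distrib]
  exact sum_congr rfl fun _ _ => by ring

lemma netOut_smul (c : ℝ) (f : V → V → ℝ) : netOut (c • f) = c • netOut f := by
  ext x
  simp only [netOut, Pi.smul_apply, smul_eq_mul, mul_sum, mul_sub]

lemma netOut_sum {ι : Type*} (s : Finset ι) (F : ι → V → V → ℝ) :
    netOut (∑ i ∈ s, F i) = ∑ i ∈ s, netOut (F i) := by
  ext x
  simp only [netOut, Finset.sum_apply, ← sum_sub_distrib]
  exact sum_comm

lemma sum_netOut (f : V → V → ℝ) : ∑ x, netOut f x = 0 := by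
  simp only [netOut, sum_sub_distrib]
  rw [sum_comm, sub_self]

lemma exists_netOut_pos {f : V → V → ℝ} (h : netOut f ≠ 0) : ∃ u, 0 < netOut f u := by
  by_contra! hle
  refine h (funext fun x => ?_)
  exact (sum_eq_zero_iff_of_nonpos fun y _ => hle y).1 (sum_netOut f) x (mem_univ x)

lemma sum_netOut_posPart (f : V → V → ℝ) :
    ∑ x, (netOut f x)⁺ = 1 / 2 * ∑ x, |netOut f x| := by
  have h := sum_netOut f
  rw [← sum_congr rfl fun x _ => posPart_sub_negPart (netOut f x), sum_sub_distrib] at h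
  rw [← sum_congr rfl fun x _ => posPart_add_negPart (netOut f x), sum_add_distrib]
  linarith

lemma netOut_single_single [DecidableEq V] (a b : V) :
    netOut (Pi.single a (Pi.single b 1)) = (Pi.single a 1 - Pi.single b 1 : V → ℝ) := by
  ext x
  have hout : ∑ y, (Pi.single a (Pi.single b 1) : V → V → ℝ) y x = (Pi.single b 1 : V → ℝ) x := by
    rw [← Finset.sum_apply, Finset.sum_pi_single', if_pos (mem_univ a)]
  simp only [netOut, sum_sub_distrib, hout, Pi.sub_apply]
  by_cases hxa : x = a
  · subst hxa; simp
  · simp [hxa]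

lemma sum_netOut_nonpos_of_forall_eq_zero [DecidableEq V] {f : V → V → ℝ}
    (hf : ∀ x y, 0 ≤ f x y) (R : Finset V) (hR : ∀ x ∈ R, ∀ y ∉ R, f x y = 0) :
    ∑ x ∈ R, netOut f x ≤ 0 := by
  have hinner : ∑ x ∈ R, ∑ y ∈ R, (f x y - f y x) = 0 := by
    simp only [sum_sub_distrib]
    rw [sum_comm, sub_self]
  calc ∑ x ∈ R, netOut f x
      = ∑ x ∈ R, ∑ y ∈ R, (f x y - f y x) + ∑ x ∈ R, ∑ y ∈ Rᶜ, (f x y - f y x) := by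
        rw [← sum_add_distrib]
        exact sum_congr rfl fun x _ => (sum_add_sum_compl R _).symm
    _ ≤ 0 := by
        rw [hinner, zero_add]
        refine sum_nonpos fun x hx => sum_nonpos fun y hy => ?_
        rw [hR x hx y (mem_compl.1 hy)]
        linarith [hf y x]

end NetOut

section Paths

variable {V : Type*} [Fintype V] [DecidableEq V]

/-- The edge multiplicities of a walk from `u` to `v`. Repeated edges are harmless: the walk is
later scaled down to its bottleneck, so no simple path is needed. -/
lemma exists_walkFlow {r : V → V → Prop} {u v : V} (h : Relation.ReflTransGen r u v) :
    ∃ n : V → V → ℝ, (∀ x y, 0 ≤ n x y) ∧ (∀ x y, n x y ≠ 0 → r x y) ∧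
      netOut n = Pi.single u 1 - Pi.single v 1 := by
  induction h with
  | refl => exact ⟨0, fun _ _ => le_rfl, fun _ _ h => absurd rfl h, by simp⟩
  | @tail b c _ hbc ih =>
    obtain ⟨n, hn0, hnr, hnet⟩ := ih
    refine ⟨n + (Pi.single b (Pi.single c 1) : V → V → ℝ), fun x y => ?_, fun x y hxy => ?_, ?_⟩
    · have hedge : (0 : V → V → ℝ) ≤ Pi.single b (Pi.single c 1) :=
        Pi.single_nonneg.2 (Pi.single_nonneg.2 zero_le_one)
      exact add_nonneg (hn0 x y) (hedge x y)
    · by_cases hn : n x y = 0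
      · have hx : x = b := by by_contra hx; simp [hn, hx] at hxy
        have hy : y = c := by by_contra hy; subst hx; simp [hn, hy] at hxy
        exact hx ▸ hy ▸ hbc
      · exact hnr x y hn
    · rw [netOut_add, hnet, netOut_single_single]
      abel

lemma exists_reflTransGen_netOut_neg {f : V → V → ℝ} (hf : ∀ x y, 0 ≤ f x y) {u : V}
    (hu : 0 < netOut f u) :
    ∃ v, Relation.ReflTransGen (fun a b => 0 < f a b) u v ∧ netOut f v < 0 := by
  classical
  by_contra! hnonneg
  let R := univ.filter (Relation.ReflTransGen (fun a b => 0 < f a b) u)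
  have hclosed : ∀ x ∈ R, ∀ y ∉ R, f x y = 0 := by
    intro x hx y hy
    refine ((hf x y).eq_or_lt.resolve_right fun hxy => ?_).symm
    exact hy (mem_filter.2 ⟨mem_univ y, (mem_filter.1 hx).2.tail hxy⟩)
  have hpos : 0 < ∑ x ∈ R, netOut f x :=
    sum_pos' (fun x hx => hnonneg x (mem_filter.1 hx).2)
      ⟨u, mem_filter.2 ⟨mem_univ u, .refl⟩, hu⟩
  exact (sum_netOut_nonpos_of_forall_eq_zero hf R hclosed).not_gt hpos

end Paths

section Peeling

variable {V : Type*} [Fintype V]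

lemma exists_saturating_smul_le {f n : V → V → ℝ} (hf : ∀ x y, 0 ≤ f x y) (hn0 : ∀ x y, 0 ≤ n x y)
    (hnf : ∀ x y, n x y ≠ 0 → 0 < f x y) (hn : n ≠ 0) :
    ∃ c > 0, (∀ x y, c * n x y ≤ f x y) ∧ ∃ a b, 0 < f a b ∧ c * n a b = f a b := by
  classical
  let E := univ.filter fun e : V × V => n e.1 e.2 ≠ 0
  have hE : E.Nonempty := by
    by_contra! hE
    refine hn (funext₂ fun x y => ?_)
    by_contra hxy
    exact (Finset.eq_empty_iff_forall_notMem.1 hE) (x, y) (mem_filter.2 ⟨mem_univ _, hxy⟩)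
  obtain ⟨⟨a, b⟩, hab, hmin⟩ := E.exists_min_image (fun e => f e.1 e.2 / n e.1 e.2) hE
  have hab : n a b ≠ 0 := (mem_filter.1 hab).2
  have hnab : 0 < n a b := (hn0 a b).lt_of_ne' hab
  refine ⟨f a b / n a b, div_pos (hnf a b hab) hnab, fun x y => ?_, a, b, hnf a b hab,
    div_mul_cancel₀ _ hab⟩
  by_cases hxy : n x y = 0
  · rw [hxy, mul_zero]
    exact hf x y
  · have := hmin (x, y) (mem_filter.2 ⟨mem_univ _, hxy⟩)
    exact (le_div_iff₀ ((hn0 x y).lt_of_ne' hxy)).1 this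

noncomputable def flowComplexity (f : V → V → ℝ) : ℕ :=
  (Function.support (Function.uncurry f)).ncard + (Function.support (netOut f)).ncard

lemma flowComplexity_sub_lt {f p : V → V → ℝ} (hp0 : ∀ x y, 0 ≤ p x y)
    (hpf : ∀ x y, p x y ≤ f x y)
    (hnet : Function.support (netOut (f - p)) ⊆ Function.support (netOut f))
    (hdrop : (∃ a b, 0 < f a b ∧ p a b = f a b) ∨ ∃ x, netOut f x ≠ 0 ∧ netOut (f - p) x = 0) :
    flowComplexity (f - p) < flowComplexity f := by
  have hedge :
      Function.support (Function.uncurry (f - p)) ⊆ Function.support (Function.uncurry f) := by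
    rintro ⟨x, y⟩ hxy
    simp only [Function.mem_support, Function.uncurry_apply_pair, Pi.sub_apply] at hxy ⊢
    contrapose! hxy
    have hp : p x y = 0 := le_antisymm (hxy ▸ hpf x y) (hp0 x y)
    rw [hxy, hp, sub_zero]
  unfold flowComplexity
  rcases hdrop with ⟨a, b, hab, hpab⟩ | ⟨x, hx, hx'⟩
  · have hlt := Set.ncard_lt_ncard <| (Set.ssubset_iff_of_subset hedge).2
      ⟨(a, b), hab.ne', by simp [hpab]⟩
    have hle := Set.ncard_le_ncard hnet
    omega
  · have hlt := Set.ncard_lt_ncard <| (Set.ssubset_iff_of_subset hnet).2 ⟨x, hx, by simpa using hx'⟩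
    have hle := Set.ncard_le_ncard hedge
    omega

variable [DecidableEq V]

lemma exists_pathFlow_flowComplexity_sub_lt {f : V → V → ℝ} (hf : ∀ x y, 0 ≤ f x y)
    (hne : netOut f ≠ 0) :
    ∃ (p : V → V → ℝ) (u v : V) (w : ℝ), 0 < w ∧ w ≤ netOut f u ∧ w ≤ -netOut f v ∧
      (∀ x y, 0 ≤ p x y) ∧ (∀ x y, p x y ≤ f x y) ∧
      netOut p = w • (Pi.single u 1 - Pi.single v 1) ∧
      flowComplexity (f - p) < flowComplexity f := by
  obtain ⟨u, hu⟩ := exists_netOut_pos hne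
  obtain ⟨v, huv, hv⟩ := exists_reflTransGen_netOut_neg hf hu
  have hne_uv : u ≠ v := by rintro rfl; linarith
  obtain ⟨n, hn0, hnf, hnet⟩ := exists_walkFlow huv
  have hn : n ≠ 0 := by
    rintro rfl
    have := congrFun hnet u
    simp [hne_uv] at this
  obtain ⟨c, hc, hcf, a, b, hab, hcab⟩ := exists_saturating_smul_le hf hn0 hnf hn
  set w := min c (min (netOut f u) (-netOut f v)) with hw
  have hw0 : 0 < w := lt_min hc (lt_min hu (by linarith))
  have hwc : w ≤ c := min_le_left _ _
  have hnet' : ∀ x, netOut (f - w • n) x =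
      netOut f x - w * ((if x = u then 1 else 0) - if x = v then 1 else 0) := by
    intro x
    simp [netOut_sub, netOut_smul, hnet, Pi.single_apply]
  have hp0 : ∀ x y, 0 ≤ (w • n) x y := fun x y => mul_nonneg hw0.le (hn0 x y)
  have hpf : ∀ x y, (w • n) x y ≤ f x y := fun x y =>
    (mul_le_mul_of_nonneg_right hwc (hn0 x y)).trans (hcf x y)
  refine ⟨w • n, u, v, w, hw0, (min_le_right _ _).trans (min_le_left _ _),
    (min_le_right _ _).trans (min_le_right _ _), hp0, hpf, by rw [netOut_smul, hnet],
    flowComplexity_sub_lt hp0 hpf ?_ ?_⟩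
  · intro x hx
    rw [Function.mem_support] at hx ⊢
    rw [hnet'] at hx
    by_cases hxu : x = u
    · subst hxu; exact hu.ne'
    by_cases hxv : x = v
    · subst hxv; exact hv.ne
    simpa [hxu, hxv] using hx
  · rcases min_choice c (min (netOut f u) (-netOut f v)) with h | h
    · exact .inl ⟨a, b, hab, by simp [← hcab, hw, h]⟩
    rcases min_choice (netOut f u) (-netOut f v) with h' | h'
    · have hwu : w = netOut f u := h.trans h'
      exact .inr ⟨u, hu.ne', by rw [hnet', ← hwu]; simp [hne_uv]⟩
    · have hwv : w = -netOut f v := h.trans h'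
      exact .inr ⟨v, hv.ne, by rw [hnet', hwv]; simp [hne_uv.symm]⟩

end Peeling

section Decomposition

variable {V : Type*} [Fintype V] [DecidableEq V]

/-- `plan u v` is the part of the excess of `f` at `u` that is routed to the deficit at `v`,
carried by the flow `part u v`. -/
structure FlowDecomposition (f : V → V → ℝ) where
  plan : V → V → ℝ
  part : V → V → V → V → ℝ
  plan_nonneg : ∀ u v, 0 ≤ plan u v
  part_nonneg : ∀ u v x y, 0 ≤ part u v x y
  sum_part_le : ∀ x y, ∑ u, ∑ v, part u v x y ≤ f x y
  netOut_part : ∀ u v, netOut (part u v) = plan u v • (Pi.single u 1 - Pi.single v 1)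
  sum_plan_right : ∀ u, ∑ v, plan u v = (netOut f u)⁺
  sum_plan_left : ∀ v, ∑ u, plan u v = (netOut f v)⁻

namespace FlowDecomposition

def ofNetOutEqZero {f : V → V → ℝ} (hf : ∀ x y, 0 ≤ f x y) (h : netOut f = 0) :
    FlowDecomposition f where
  plan := 0
  part := 0
  plan_nonneg _ _ := le_rfl
  part_nonneg _ _ _ _ := le_rfl
  sum_part_le x y := by simpa using hf x y
  netOut_part _ _ := by simp
  sum_plan_right u := by simp [h]
  sum_plan_left v := by simp [h]

def addPath {f p : V → V → ℝ} {u v : V} {w : ℝ} (D : FlowDecomposition (f - p))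
    (hp : ∀ x y, 0 ≤ p x y) (hw : 0 < w) (hu : w ≤ netOut f u) (hv : w ≤ -netOut f v)
    (hnet : netOut p = w • (Pi.single u 1 - Pi.single v 1)) : FlowDecomposition f where
  plan a b := D.plan a b + if a = u ∧ b = v then w else 0
  part a b := D.part a b + if a = u ∧ b = v then p else 0
  plan_nonneg a b := add_nonneg (D.plan_nonneg a b) (by split_ifs <;> simp [hw.le])
  part_nonneg a b x y := add_nonneg (D.part_nonneg a b x y) (by split_ifs <;> simp [hp x y])
  sum_part_le x y := by
    have := D.sum_part_le x y
    simp only [Pi.add_apply, sum_add_distrib, apply_ite (fun q : V → V → ℝ => q x y),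
      Pi.zero_apply, Pi.sub_apply] at this ⊢
    simp [ite_and]
    linarith
  netOut_part a b := by
    rw [netOut_add, D.netOut_part]
    by_cases hab : a = u ∧ b = v
    · obtain ⟨rfl, rfl⟩ := hab
      simp [hnet, add_smul]
    · simp [hab]
  sum_plan_right a := by
    have huv : u ≠ v := by rintro rfl; linarith
    have hD := D.sum_plan_right a
    rw [netOut_sub, hnet] at hD
    simp only [sum_add_distrib, ite_and, hD]
    by_cases hau : a = u
    · subst hau
      simp [huv, posPart_eq_self.2 (sub_nonneg.2 hu), posPart_eq_self.2 (hw.le.trans hu)]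
    by_cases hav : a = v
    · subst hav
      simp [Ne.symm huv, posPart_eq_zero.2 (show netOut f a + w ≤ 0 by linarith),
        posPart_eq_zero.2 (show netOut f a ≤ 0 by linarith)]
    · simp [hau, hav]
  sum_plan_left b := by
    have huv : u ≠ v := by rintro rfl; linarith
    have hD := D.sum_plan_left b
    rw [netOut_sub, hnet] at hD
    simp only [sum_add_distrib, ite_and, hD]
    by_cases hbv : b = v
    · subst hbv
      simp [Ne.symm huv, negPart_eq_neg.2 (show netOut f b + w ≤ 0 by linarith),
        negPart_eq_neg.2 (show netOut f b ≤ 0 by linarith)]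
    by_cases hbu : b = u
    · subst hbu
      simp [huv, negPart_eq_zero.2 (sub_nonneg.2 hu), negPart_eq_zero.2 (hw.le.trans hu)]
    · simp [hbu, hbv]

theorem nonempty {f : V → V → ℝ} (hf : ∀ x y, 0 ≤ f x y) : Nonempty (FlowDecomposition f) := by
  induction hc : flowComplexity f using Nat.strong_induction_on generalizing f with
  | _ n ih =>
  by_cases h : netOut f = 0
  · exact ⟨ofNetOutEqZero hf h⟩
  obtain ⟨p, u, v, w, hw, hu, hv, hp0, hpf, hnet, hlt⟩ :=
    exists_pathFlow_flowComplexity_sub_lt hf h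
  obtain ⟨D⟩ := ih _ (hc ▸ hlt) (fun x y => sub_nonneg.2 (hpf x y)) rfl
  exact ⟨D.addPath hp0 hw hu hv hnet⟩

end FlowDecomposition

end Decomposition

section Inequalities

lemma abs_posPart_sub_le (a : ℝ) {c : ℝ} (hc : 0 ≤ c) : |a⁺ - c| ≤ |a - c| := by
  rcases le_total a 0 with ha | ha
  · rw [posPart_eq_zero.2 ha, zero_sub, abs_neg, abs_of_nonneg hc, abs_of_nonpos (by linarith)]
    linarith
  · rw [posPart_eq_self.2 ha]

lemma abs_negPart_sub_le (a : ℝ) {c : ℝ} (hc : 0 ≤ c) : |a⁻ - c| ≤ |-a - c| := by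
  simpa using abs_posPart_sub_le (-a) hc

lemma posPart_le_abs_neg_sub (a : ℝ) {c : ℝ} (hc : 0 ≤ c) : a⁺ ≤ |-a - c| := by
  rcases le_total a 0 with ha | ha
  · rw [posPart_eq_zero.2 ha]; exact abs_nonneg _
  · rw [posPart_eq_self.2 ha, abs_of_nonpos (by linarith)]; linarith

lemma negPart_le_abs_sub (a : ℝ) {c : ℝ} (hc : 0 ≤ c) : a⁻ ≤ |a - c| := by
  simpa using posPart_le_abs_neg_sub (-a) hc

lemma sum_abs_sub_div_card_le {ι : Type*} (s : Finset ι) (a b : ι → ℝ) {A B : ℝ}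
    (hba : ∀ i ∈ s, b i ≤ a i) (hBA : B ≤ A) :
    ∑ i ∈ s, |b i - B / #s| ≤ ∑ i ∈ s, |a i - A / #s| + (A - B) + ∑ i ∈ s, (a i - b i) := by
  have hshare : 0 ≤ (A - B) / #s := div_nonneg (sub_nonneg.2 hBA) (Nat.cast_nonneg _)
  have hterm : ∀ i ∈ s, |b i - B / #s| ≤ |a i - A / #s| + (A - B) / #s + (a i - b i) := by
    intro i hi
    have h1 := hba i hi
    have : b i - B / #s = (a i - A / #s) + (A - B) / #s - (a i - b i) := by ring
    rw [this, abs_le]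
    constructor <;> linarith [le_abs_self (a i - A / #s), neg_abs_le (a i - A / #s)]
  have hcard : ∑ _i ∈ s, (A - B) / #s ≤ A - B := by
    rw [sum_const, nsmul_eq_mul]
    rcases eq_or_ne (#s : ℝ) 0 with h | h
    · rw [h, zero_mul]; linarith
    · rw [mul_div_cancel₀ _ h]
  calc ∑ i ∈ s, |b i - B / #s|
      ≤ ∑ i ∈ s, (|a i - A / #s| + (A - B) / #s + (a i - b i)) := sum_le_sum hterm
    _ ≤ _ := by simp only [sum_add_distrib]; linarith

variable {ι κ : Type*} [Fintype ι] [Fintype κ] [DecidableEq ι] [DecidableEq κ]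

lemma sum_sum_eq_add_sum_sum_compl (φ : ι → κ → ℝ) (I : Finset ι) (K : Finset κ) :
    ∑ i, ∑ k, φ i k
      = ∑ i ∈ I, ∑ k ∈ K, φ i k + ∑ i ∈ I, ∑ k ∈ Kᶜ, φ i k + ∑ i ∈ Iᶜ, ∑ k, φ i k := by
  rw [← sum_add_sum_compl I, ← sum_add_distrib]
  simp only [sum_add_sum_compl]

lemma sum_sum_sub_sum_sum_le (φ : ι → κ → ℝ) (hφ : ∀ i k, 0 ≤ φ i k) (I : Finset ι)
    (K : Finset κ) :
    ∑ i, ∑ k, φ i k - ∑ i ∈ I, ∑ k ∈ K, φ i k ≤ ∑ i ∈ Iᶜ, ∑ k, φ i k + ∑ i, ∑ k ∈ Kᶜ, φ i k := by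
  have : ∑ i ∈ I, ∑ k ∈ Kᶜ, φ i k ≤ ∑ i, ∑ k ∈ Kᶜ, φ i k :=
    sum_le_sum_of_subset_of_nonneg (subset_univ I) fun i _ _ => sum_nonneg fun k _ => hφ i k
  rw [sum_sum_eq_add_sum_sum_compl φ I K]
  linarith

lemma sum_abs_sum_sub_le (φ : ι → κ → ℝ) (hφ : ∀ i k, 0 ≤ φ i k) (I : Finset ι) (K : Finset κ) :
    ∑ i ∈ I, |∑ k ∈ K, φ i k - (∑ i ∈ I, ∑ k ∈ K, φ i k) / #I|
      ≤ ∑ i ∈ I, |∑ k, φ i k - (∑ i, ∑ k, φ i k) / #I|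
        + (∑ i, ∑ k, φ i k - ∑ i ∈ I, ∑ k ∈ K, φ i k) + ∑ i ∈ I, ∑ k ∈ Kᶜ, φ i k := by
  have hrow : ∀ i, ∑ k, φ i k - ∑ k ∈ K, φ i k = ∑ k ∈ Kᶜ, φ i k := fun i => by
    rw [← sum_add_sum_compl K]; ring
  simp only [← hrow]
  refine sum_abs_sub_div_card_le I _ _ (fun i _ => ?_) ?_
  · exact sum_le_sum_of_subset_of_nonneg (subset_univ K) fun k _ _ => hφ i k
  · have := sum_sum_eq_add_sum_sum_compl φ I K
    have h1 : 0 ≤ ∑ i ∈ I, ∑ k ∈ Kᶜ, φ i k := sum_nonneg fun i _ => sum_nonneg fun k _ => hφ i k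
    have h2 : 0 ≤ ∑ i ∈ Iᶜ, ∑ k, φ i k := sum_nonneg fun i _ => sum_nonneg fun k _ => hφ i k
    linarith

lemma sum_abs_marginal_sub_le (φ : ι → κ → ℝ) (hφ : ∀ i k, 0 ≤ φ i k) (I : Finset ι)
    (K : Finset κ) :
    ∑ i ∈ I, |∑ k ∈ K, φ i k - (∑ i ∈ I, ∑ k ∈ K, φ i k) / #I|
        + ∑ k ∈ K, |∑ i ∈ I, φ i k - (∑ i ∈ I, ∑ k ∈ K, φ i k) / #K|
      ≤ ∑ i ∈ I, |∑ k, φ i k - (∑ i, ∑ k, φ i k) / #I|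
        + ∑ k ∈ K, |∑ i, φ i k - (∑ i, ∑ k, φ i k) / #K|
        + 3 * (∑ i, ∑ k, φ i k - ∑ i ∈ I, ∑ k ∈ K, φ i k) := by
  have hrows := sum_abs_sum_sub_le φ hφ I K
  have hcols := sum_abs_sum_sub_le (fun k i => φ i k) (fun k i => hφ i k) K I
  rw [sum_comm (s := K), sum_comm (s := univ) (t := univ)] at hcols
  have hsplit := sum_sum_eq_add_sum_sum_compl φ I K
  have hleak : ∑ k ∈ K, ∑ i ∈ Iᶜ, φ i k ≤ ∑ i ∈ Iᶜ, ∑ k, φ i k := by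
    rw [sum_comm]
    exact sum_le_sum fun i _ =>
      sum_le_sum_of_subset_of_nonneg (subset_univ K) fun k _ _ => hφ i k
  linarith

end Inequalities

section Network

variable {V : Type*} [Fintype V] [DecidableEq V]

lemma sum_compl_eq_sum_compl_union_add {S T : Finset V} (hST : Disjoint S T) (g : V → ℝ) :
    ∑ x ∈ Sᶜ, g x = ∑ x ∈ univ \ (S ∪ T), g x + ∑ x ∈ T, g x := by
  have hS := sum_add_sum_compl S g
  have hST' := sum_add_sum_compl (S ∪ T) g
  rw [sum_union hST, compl_eq_univ_sdiff] at hST'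
  linarith

lemma sum_compl_posPart_add_sum_compl_negPart_le {S T : Finset V} (hST : Disjoint S T)
    (e : V → ℝ) {c d : ℝ} (hc : 0 ≤ c) (hd : 0 ≤ d) :
    ∑ x ∈ Sᶜ, (e x)⁺ + ∑ x ∈ Tᶜ, (e x)⁻
      ≤ ∑ x ∈ univ \ (S ∪ T), |e x| + (∑ x ∈ S, |e x - c| + ∑ x ∈ T, |-e x - d|) := by
  rw [sum_compl_eq_sum_compl_union_add hST, sum_compl_eq_sum_compl_union_add hST.symm,
    union_comm T S]
  have hout : ∑ x ∈ univ \ (S ∪ T), (e x)⁺ + ∑ x ∈ univ \ (S ∪ T), (e x)⁻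
      = ∑ x ∈ univ \ (S ∪ T), |e x| := by
    rw [← sum_add_distrib]
    exact sum_congr rfl fun x _ => posPart_add_negPart (e x)
  have hT := sum_le_sum fun x (_ : x ∈ T) => posPart_le_abs_neg_sub (e x) hd
  have hS := sum_le_sum fun x (_ : x ∈ S) => negPart_le_abs_sub (e x) hc
  linarith

end Network

namespace FlowDecomposition

variable {V : Type*} [Fintype V] [DecidableEq V] {f : V → V → ℝ} (D : FlowDecomposition f)

lemma sum_sum_plan : ∑ u, ∑ v, D.plan u v = 1 / 2 * ∑ x, |netOut f x| := by
  simp only [D.sum_plan_right]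
  exact sum_netOut_posPart f

lemma sum_sum_plan_sub_le (S T : Finset V) :
    ∑ u, ∑ v, D.plan u v - ∑ u ∈ S, ∑ v ∈ T, D.plan u v
      ≤ ∑ x ∈ Sᶜ, (netOut f x)⁺ + ∑ x ∈ Tᶜ, (netOut f x)⁻ := by
  have hrow : ∑ u ∈ Sᶜ, ∑ v, D.plan u v = ∑ x ∈ Sᶜ, (netOut f x)⁺ :=
    sum_congr rfl fun u _ => D.sum_plan_right u
  have hcol : ∑ u, ∑ v ∈ Tᶜ, D.plan u v = ∑ x ∈ Tᶜ, (netOut f x)⁻ := by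
    rw [sum_comm]
    exact sum_congr rfl fun v _ => D.sum_plan_left v
  rw [← hrow, ← hcol]
  exact sum_sum_sub_sum_sum_le D.plan D.plan_nonneg S T

def restrict (S T : Finset V) : V → V → ℝ := ∑ u ∈ S, ∑ v ∈ T, D.part u v

lemma restrict_nonneg (S T : Finset V) (x y : V) : 0 ≤ D.restrict S T x y := by
  simp only [restrict, Finset.sum_apply]
  exact sum_nonneg fun u _ => sum_nonneg fun v _ => D.part_nonneg u v x y

lemma restrict_le (S T : Finset V) (x y : V) : D.restrict S T x y ≤ f x y := by
  refine le_trans ?_ (D.sum_part_le x y)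
  simp only [restrict, Finset.sum_apply]
  refine sum_le_sum_of_subset_of_nonneg (subset_univ S) (fun u _ _ => ?_) |>.trans
    (sum_le_sum fun u _ => ?_)
  · exact sum_nonneg fun v _ => D.part_nonneg u v x y
  · exact sum_le_sum_of_subset_of_nonneg (subset_univ T) fun v _ _ => D.part_nonneg u v x y

lemma netOut_restrict (S T : Finset V) (x : V) :
    netOut (D.restrict S T) x
      = (if x ∈ S then ∑ v ∈ T, D.plan x v else 0) - if x ∈ T then ∑ u ∈ S, D.plan u x else 0 := by
  simp only [restrict, netOut_sum, D.netOut_part, Finset.sum_apply, Pi.smul_apply, Pi.sub_apply,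
    Pi.single_apply, smul_eq_mul, mul_sub, mul_ite, mul_one, mul_zero, sum_sub_distrib]
  rw [sum_comm (s := S) (t := T)]
  simp only [sum_ite_irrel, sum_const_zero, sum_ite_eq]

variable {S T : Finset V} (hST : Disjoint S T)
include hST

lemma netOut_restrict_of_mem_left {s : V} (hs : s ∈ S) :
    netOut (D.restrict S T) s = ∑ t ∈ T, D.plan s t := by
  simp [D.netOut_restrict, hs, disjoint_left.1 hST hs]

lemma netOut_restrict_of_mem_right {t : V} (ht : t ∈ T) :
    netOut (D.restrict S T) t = -∑ s ∈ S, D.plan s t := by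
  simp [D.netOut_restrict, ht, disjoint_right.1 hST ht]

lemma sum_netOut_restrict_left :
    ∑ s ∈ S, netOut (D.restrict S T) s = ∑ s ∈ S, ∑ t ∈ T, D.plan s t :=
  sum_congr rfl fun _ hs => D.netOut_restrict_of_mem_left hST hs

lemma sum_neg_netOut_restrict_right :
    ∑ t ∈ T, -netOut (D.restrict S T) t = ∑ s ∈ S, ∑ t ∈ T, D.plan s t := by
  rw [sum_comm]
  exact sum_congr rfl fun _ ht => by rw [D.netOut_restrict_of_mem_right hST ht, neg_neg]

lemma sum_abs_netOut_restrict_sub_le :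
    ∑ v ∈ S, |netOut (D.restrict S T) v - (∑ s ∈ S, ∑ t ∈ T, D.plan s t) / #S|
        + ∑ v ∈ T, |-netOut (D.restrict S T) v - (∑ s ∈ S, ∑ t ∈ T, D.plan s t) / #T|
      ≤ ∑ v ∈ S, |netOut f v - (∑ u, ∑ v, D.plan u v) / #S|
        + ∑ v ∈ T, |-netOut f v - (∑ u, ∑ v, D.plan u v) / #T|
        + 3 * (∑ u, ∑ v, D.plan u v - ∑ s ∈ S, ∑ t ∈ T, D.plan s t) := by
  have htot : 0 ≤ ∑ u, ∑ v, D.plan u v :=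
    sum_nonneg fun u _ => sum_nonneg fun v _ => D.plan_nonneg u v
  set vol := ∑ s ∈ S, ∑ t ∈ T, D.plan s t
  have hsrc : ∑ v ∈ S, |netOut (D.restrict S T) v - vol / #S|
      = ∑ s ∈ S, |∑ t ∈ T, D.plan s t - vol / #S| :=
    sum_congr rfl fun s hs => by rw [D.netOut_restrict_of_mem_left hST hs]
  have hsnk : ∑ v ∈ T, |-netOut (D.restrict S T) v - vol / #T|
      = ∑ t ∈ T, |∑ s ∈ S, D.plan s t - vol / #T| :=
    sum_congr rfl fun t ht => by rw [D.netOut_restrict_of_mem_right hST ht, neg_neg]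
  have hS := sum_le_sum fun v (_ : v ∈ S) =>
    abs_posPart_sub_le (netOut f v) (div_nonneg htot (Nat.cast_nonneg #S))
  have hT := sum_le_sum fun v (_ : v ∈ T) =>
    abs_negPart_sub_le (netOut f v) (div_nonneg htot (Nat.cast_nonneg #T))
  have := sum_abs_marginal_sub_le D.plan D.plan_nonneg S T
  simp only [D.sum_plan_right, D.sum_plan_left] at this hS hT
  rw [hsrc, hsnk, sum_congr rfl fun u _ => D.sum_plan_right u]
  linarith

end FlowDecomposition

theorem stmt17_general {V : Type*} [Fintype V] [DecidableEq V]
    (S T : Finset V) (hST : Disjoint S T)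
    (θ : ℝ) (hθ0 : 0 < θ) (hθ : θ < 1 / 9)
    (f : V → V → ℝ) (hf : ∀ x y, 0 ≤ f x y)
    (sz : ℝ) (hsz : sz = (1 / 2) * ∑ v, |netOut f v|)
    (ha : ∑ v ∈ Finset.univ \ (S ∪ T), |netOut f v| ≤ θ * sz)
    (hb : ∑ v ∈ S, |netOut f v - sz / S.card| + ∑ v ∈ T, |(- netOut f v) - sz / T.card|
            ≤ θ * sz) :
    ∃ g : V → V → ℝ,
      (∀ x y, 0 ≤ g x y ∧ g x y ≤ f x y) ∧
      (∀ v, v ∉ S → v ∉ T → netOut g v = 0) ∧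
      (∀ s ∈ S, 0 ≤ netOut g s) ∧ (∀ t ∈ T, netOut g t ≤ 0) ∧
      (∑ s ∈ S, netOut g s = ∑ t ∈ T, (- netOut g t)) ∧
      ((1 - 2 * θ) * sz ≤ ∑ s ∈ S, netOut g s) ∧
      (∑ v ∈ S, |netOut g v - (∑ s ∈ S, netOut g s) / S.card| +
          ∑ v ∈ T, |(- netOut g v) - (∑ s ∈ S, netOut g s) / T.card|
        ≤ 9 * θ * ∑ s ∈ S, netOut g s) := by
  obtain ⟨D⟩ := FlowDecomposition.nonempty hf
  have htot : ∑ u, ∑ v, D.plan u v = sz := hsz ▸ D.sum_sum_plan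
  have hsz0 : 0 ≤ sz := hsz ▸ by positivity
  have hleak : sz - ∑ s ∈ S, ∑ t ∈ T, D.plan s t ≤ 2 * θ * sz := by
    have := sum_compl_posPart_add_sum_compl_negPart_le hST (netOut f)
      (div_nonneg hsz0 (Nat.cast_nonneg #S)) (div_nonneg hsz0 (Nat.cast_nonneg #T))
    have := D.sum_sum_plan_sub_le S T
    linarith
  have hbal := D.sum_abs_netOut_restrict_sub_le hST
  rw [htot] at hbal
  refine ⟨D.restrict S T, fun x y => ⟨D.restrict_nonneg S T x y, D.restrict_le S T x y⟩,
    fun v hvS hvT => by simp [D.netOut_restrict, hvS, hvT], fun s hs => ?_, fun t ht => ?_,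
    (D.sum_netOut_restrict_left hST).trans (D.sum_neg_netOut_restrict_right hST).symm, ?_, ?_⟩
  · rw [D.netOut_restrict_of_mem_left hST hs]
    exact sum_nonneg fun t _ => D.plan_nonneg s t
  · rw [D.netOut_restrict_of_mem_right hST ht, neg_nonpos]
    exact sum_nonneg fun s _ => D.plan_nonneg s t
  all_goals rw [D.sum_netOut_restrict_left hST]
  · linarith
  · have := mul_le_mul_of_nonneg_left hleak hθ0.le
    linarith [mul_nonneg (mul_nonneg hθ0.le hsz0) (by linarith : (0 : ℝ) ≤ 2 - 18 * θ)]

/-- Lemma on turning a nearly-proper, nearly-balanced improper flow into a proper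
`ST` flow: given `0 < θ < 1/9` and a nonnegative (possibly improper) flow `f` whose
imbalance off `S ∪ T` and whose deviation from balance on `S` and `T` are both at most
`θ·size(f)`, there is a proper `ST` flow `g` dominated by `f`, of volume at least
`(1−2θ)·size(f)`, which is `9θ`-near-balanced. -/
theorem stmt17 {V : Type*} [Fintype V] [DecidableEq V]
    (S T : Finset V) (hS : S.Nonempty) (hT : T.Nonempty) (hST : Disjoint S T)
    (θ : ℝ) (hθ0 : 0 < θ) (hθ : θ < 1 / 9)
    (f : V → V → ℝ) (hf : ∀ x y, 0 ≤ f x y)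
    (sz : ℝ) (hsz : sz = (1 / 2) * ∑ v, |netOut f v|)
    (ha : ∑ v ∈ Finset.univ \ (S ∪ T), |netOut f v| ≤ θ * sz)
    (hb : ∑ v ∈ S, |netOut f v - sz / S.card| + ∑ v ∈ T, |(- netOut f v) - sz / T.card|
            ≤ θ * sz) :
    ∃ g : V → V → ℝ,
      (∀ x y, 0 ≤ g x y ∧ g x y ≤ f x y) ∧
      (∀ v, v ∉ S → v ∉ T → netOut g v = 0) ∧
      (∀ s ∈ S, 0 ≤ netOut g s) ∧ (∀ t ∈ T, netOut g t ≤ 0) ∧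
      (∑ s ∈ S, netOut g s = ∑ t ∈ T, (- netOut g t)) ∧
      ((1 - 2 * θ) * sz ≤ ∑ s ∈ S, netOut g s) ∧
      (∑ v ∈ S, |netOut g v - (∑ s ∈ S, netOut g s) / S.card| +
          ∑ v ∈ T, |(- netOut g v) - (∑ s ∈ S, netOut g s) / T.card|
        ≤ 9 * θ * ∑ s ∈ S, netOut g s) :=
  stmt17_general S T hST θ hθ0 hθ f hf sz hsz ha hb
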